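/- Let V be an n-dimensional vector space over a field K of characteristic zero and let λ be a Young tableau with l boxes and Young symmetrizer c_λ ∈ K[S_l]. Then the Schur module 𝕊_λ(V) := V^{⊗l} ⊗_{K[S_l]} K[S_l]c_λ is zero if and only if the Young diagram of λ has strictly more than n rows. -/

import Mathlib

open scoped Classical BigOperators

/-- The endomorphism of `V^{⊗ l}` induced by the Young symmetrizer `c_λ` of a Young tableau,
i.e. of a bijective filling `T : μ.cells ≃ Fin l` of a Young diagram `μ` with `l` boxes:
the sum over pairs `(p, q)` with `p` in the row stabilizer and `q` in the (signed) column
stabilizer of `sign q` times the permutation action of `p * q` on the tensor factors.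
Its image is the Schur module `𝕊_λ(V) = V^{⊗l} ⊗_{K[S_l]} K[S_l]c_λ` (char 0). -/
noncomputable def youngSymmetrizerAction (K V : Type) [Field K] [AddCommGroup V] [Module K V]
    (l : ℕ) (μ : YoungDiagram) (T : ↥μ.cells ≃ Fin l) :
    PiTensorProduct K (fun _ : Fin l => V) →ₗ[K] PiTensorProduct K (fun _ : Fin l => V) :=
  ∑ p : Equiv.Perm (Fin l), ∑ q : Equiv.Perm (Fin l),
    (if (∀ i, ((T.symm (p i)) : ℕ × ℕ).1 = ((T.symm i) : ℕ × ℕ).1)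
        ∧ (∀ i, ((T.symm (q i)) : ℕ × ℕ).2 = ((T.symm i) : ℕ × ℕ).2)
      then ((Equiv.Perm.sign q : ℤ) : K) else 0) •
      (PiTensorProduct.reindex K (fun _ : Fin l => V) (p * q)).toLinearMap

/-!
Factor `c_λ = a_λ b_λ`, where `a_λ` sums the row stabilizer and `b_λ` is the signed sum over
the column stabilizer. If the first column has more than `dim V` cells, `b_λ` is alternating in
the tensor factors sitting in that column, so it kills every pure tensor of basis vectors (two
of those factors coincide by pigeonhole). Otherwise fill each cell of row `r` with the basis
vector `e_r`: for `p` row-preserving and `q` column-preserving, the basis tensor `(p q)·v` equals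
`v` only when `q = 1`, so the `v`-coordinate of `c_λ v` is the order of the row stabilizer,
nonzero in characteristic zero.
-/

open Equiv Finset Module PiTensorProduct
open scoped TensorProduct

theorem MultilinearMap.eq_zero_of_finrank_lt_card {K V M ι : Type*} [Field K]
    [AddCommGroup V] [Module K V] [FiniteDimensional K V] [AddCommGroup M] [Module K M]
    [Fintype ι] (F : MultilinearMap K (fun _ : ι => V) M) (s : Finset ι)
    (hs : finrank K V < #s)
    (hF : ∀ f : ι → V, ∀ i ∈ s, ∀ j ∈ s, i ≠ j → f i = f j → F f = 0) : F = 0 := by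
  let b := finBasis K V
  refine Basis.ext_multilinear (fun _ => b) fun r => ?_
  obtain ⟨i, hi, j, hj, hij, hr⟩ := exists_ne_map_eq_of_card_lt_of_maps_to
    (t := univ) (by simpa using hs) (f := r) fun _ _ => mem_univ _
  exact hF _ i hi j hj hij (congrArg b hr)

namespace PiTensorProduct

variable {K V ι : Type*} [Field K] [AddCommGroup V] [Module K V]

theorem reindex_mul_reindex (p q : Perm ι) :
    (reindex K (fun _ : ι => V) p : Module.End K (⨂[K] _ : ι, V)) * reindex K (fun _ => V) q =
      reindex K (fun _ => V) (p * q) := by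
  rw [Module.End.mul_eq_comp, ← LinearEquiv.coe_trans, reindex_trans]
  rfl

theorem reindex_basisPiTensorProduct {κ : Type*} [Fintype ι] (b : Basis κ K V) (σ : Perm ι)
    (r : ι → κ) :
    reindex K (fun _ => V) σ (Basis.piTensorProduct (fun _ => b) r) =
      Basis.piTensorProduct (fun _ => b) (fun i => r (σ.symm i)) := by
  simp [reindex_tprod]

theorem sum_sign_smul_reindex_tprod_eq_zero [Fintype ι] [DecidableEq ι]
    (C : Finset (Perm ι)) {i j : ι} (hij : i ≠ j) (hC : ∀ q ∈ C, q * swap i j ∈ C)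
    {f : ι → V} (hf : f i = f j) :
    ∑ q ∈ C, ((Perm.sign q : ℤ) : K) • reindex K (fun _ : ι => V) q (tprod K f) = 0 := by
  -- `q ↦ q * swap i j` flips the sign and, as `f i = f j`, fixes the tensor
  refine sum_involution (fun q _ => q * swap i j) (fun q _ => ?_)
    (fun q _ _ => by simpa using hij) hC (fun q _ => by simp)
  have hf' : (fun k => f ((q * swap i j).symm k)) = fun k => f (q.symm k) := by
    funext k
    simpa [Perm.mul_def] using apply_swap_eq_self hf (q.symm k)
  simp [reindex_tprod, hf', Perm.sign_mul, Perm.sign_swap hij]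

end PiTensorProduct

namespace YoungTableau

variable {l : ℕ} {μ : YoungDiagram} (T : μ.cells ≃ Fin l)

def rowIndex (i : Fin l) : ℕ := (T.symm i : ℕ × ℕ).1

def colIndex (i : Fin l) : ℕ := (T.symm i : ℕ × ℕ).2

def rowStabilizer : Finset (Perm (Fin l)) :=
  univ.filter fun p => ∀ i, rowIndex T (p i) = rowIndex T i

def colStabilizer : Finset (Perm (Fin l)) :=
  univ.filter fun q => ∀ i, colIndex T (q i) = colIndex T i

theorem card_filter_colIndex_eq (j : ℕ) : #{i | colIndex T i = j} = μ.colLen j := by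
  rw [μ.colLen_eq_card]
  refine card_bij (fun i _ => (T.symm i : ℕ × ℕ)) (fun i hi => ?_)
    (fun _ _ _ _ h => T.symm.injective (Subtype.ext h)) (fun c hc => ?_)
  · exact YoungDiagram.mem_col_iff.2 ⟨(T.symm i).2, (mem_filter.1 hi).2⟩
  · obtain ⟨hmem, rfl⟩ := YoungDiagram.mem_col_iff.1 hc
    exact ⟨T ⟨c, hmem⟩, mem_filter.2 ⟨mem_univ _, by simp [colIndex]⟩, by simp⟩

theorem rowIndex_lt_colLen_zero (i : Fin l) : rowIndex T i < μ.colLen 0 :=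
  (YoungDiagram.mem_iff_lt_colLen.1 (T.symm i).2).trans_le (μ.colLen_anti 0 _ (Nat.zero_le _))

theorem one_mem_rowStabilizer : 1 ∈ rowStabilizer T := by
  simp [rowStabilizer]

theorem one_mem_colStabilizer : 1 ∈ colStabilizer T := by
  simp [colStabilizer]

theorem eq_one_of_mem_rowStabilizer_of_mem_colStabilizer {q : Perm (Fin l)}
    (hr : q ∈ rowStabilizer T) (hc : q ∈ colStabilizer T) : q = 1 := by
  simp only [rowStabilizer, colStabilizer, mem_filter, mem_univ, true_and] at hr hc
  exact Equiv.ext fun i => T.symm.injective (Subtype.ext (Prod.ext (hr i) (hc i)))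

theorem mul_swap_mem_colStabilizer {q : Perm (Fin l)} (hq : q ∈ colStabilizer T) {i j : Fin l}
    (hij : colIndex T i = colIndex T j) : q * swap i j ∈ colStabilizer T := by
  simp only [colStabilizer, mem_filter, mem_univ, true_and] at hq ⊢
  intro k
  rw [Perm.mul_apply, hq, apply_swap_eq_self hij]

theorem forall_rowIndex_symm_mul_eq_iff {p q : Perm (Fin l)} (hp : p ∈ rowStabilizer T)
    (hq : q ∈ colStabilizer T) :
    (∀ i, rowIndex T ((p * q).symm i) = rowIndex T i) ↔ q = 1 := by
  simp only [rowStabilizer, mem_filter, mem_univ, true_and] at hp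
  constructor
  · intro h
    refine eq_one_of_mem_rowStabilizer_of_mem_colStabilizer T ?_ hq
    simp only [rowStabilizer, mem_filter, mem_univ, true_and]
    intro i
    have := h ((p * q) i)
    rw [symm_apply_apply, Perm.mul_apply, hp] at this
    exact this.symm
  · rintro rfl i
    simpa using (hp (p.symm i)).symm

variable (K V : Type) [Field K] [AddCommGroup V] [Module K V]

def rowSymmetrizer : Module.End K (⨂[K] _ : Fin l, V) :=
  ∑ p ∈ rowStabilizer T, (reindex K (fun _ => V) p).toLinearMap

def colAntisymmetrizer : Module.End K (⨂[K] _ : Fin l, V) :=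
  ∑ q ∈ colStabilizer T, ((Perm.sign q : ℤ) : K) • (reindex K (fun _ => V) q).toLinearMap

theorem youngSymmetrizerAction_eq_sum :
    youngSymmetrizerAction K V l μ T = ∑ p ∈ rowStabilizer T, ∑ q ∈ colStabilizer T,
      ((Perm.sign q : ℤ) : K) • (reindex K (fun _ => V) (p * q)).toLinearMap := by
  rw [youngSymmetrizerAction, rowStabilizer, sum_filter]
  refine sum_congr rfl fun p _ => ?_
  rw [colStabilizer, sum_filter]
  split_ifs with hp
  · exact sum_congr rfl fun q _ => by split_ifs <;> simp_all [rowIndex, colIndex]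
  · exact sum_eq_zero fun q _ => by rw [if_neg (fun h => hp h.1), zero_smul]

theorem youngSymmetrizerAction_eq_mul :
    youngSymmetrizerAction K V l μ T = rowSymmetrizer T K V * colAntisymmetrizer T K V := by
  simp only [youngSymmetrizerAction_eq_sum, rowSymmetrizer, colAntisymmetrizer, sum_mul_sum,
    mul_smul_comm, reindex_mul_reindex]

theorem colAntisymmetrizer_eq_zero [FiniteDimensional K V] (h : finrank K V < μ.colLen 0) :
    colAntisymmetrizer T K V = 0 := by
  refine PiTensorProduct.ext ?_
  rw [LinearMap.zero_compMultilinearMap]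
  refine MultilinearMap.eq_zero_of_finrank_lt_card _ {i | colIndex T i = 0}
    (by rwa [card_filter_colIndex_eq]) fun f i hi j hj hij hf => ?_
  simp only [mem_filter, mem_univ, true_and] at hi hj
  simp only [colAntisymmetrizer, LinearMap.compMultilinearMap_apply, LinearMap.sum_apply,
    LinearMap.smul_apply, LinearEquiv.coe_coe]
  exact sum_sign_smul_reindex_tprod_eq_zero _ hij
    (fun q hq => mul_swap_mem_colStabilizer T hq (hi.trans hj.symm)) hf

theorem youngSymmetrizerAction_ne_zero [CharZero K] [FiniteDimensional K V]
    (h : μ.colLen 0 ≤ finrank K V) : youngSymmetrizerAction K V l μ T ≠ 0 := by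
  let B := Basis.piTensorProduct fun _ : Fin l => finBasis K V
  let g : Fin l → Fin (finrank K V) :=
    fun i => ⟨rowIndex T i, (rowIndex_lt_colLen_zero T i).trans_le h⟩
  have hcoord : ∀ p ∈ rowStabilizer T, ∀ q ∈ colStabilizer T,
      B.repr (reindex K (fun _ => V) (p * q) (B g)) g = if q = 1 then 1 else 0 := by
    intro p hp q hq
    rw [reindex_basisPiTensorProduct, Basis.repr_self, Finsupp.single_apply]
    refine if_congr ?_ rfl rfl
    rw [← forall_rowIndex_symm_mul_eq_iff T hp hq]
    simp [g, funext_iff, Fin.ext_iff]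
  have hcard : B.repr (youngSymmetrizerAction K V l μ T (B g)) g = #(rowStabilizer T) := by
    simp only [youngSymmetrizerAction_eq_sum, LinearMap.sum_apply, LinearMap.smul_apply,
      LinearEquiv.coe_coe, map_sum, map_smul, Finsupp.coe_finsetSum, Finset.sum_apply,
      Finsupp.smul_apply, card_eq_sum_ones, Nat.cast_sum, Nat.cast_one]
    refine sum_congr rfl fun p hp => ?_
    rw [sum_eq_single_of_mem 1 (one_mem_colStabilizer T)
      fun q hq hq1 => by rw [hcoord p hp q hq, if_neg hq1, smul_zero],
      hcoord p hp 1 (one_mem_colStabilizer T), if_pos rfl, Perm.sign_one]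
    simp
  intro h0
  rw [h0, LinearMap.zero_apply, map_zero, Finsupp.zero_apply, eq_comm, Nat.cast_eq_zero] at hcard
  exact card_ne_zero_of_mem (one_mem_rowStabilizer T) hcard

end YoungTableau

/-- Over a field `K` of characteristic zero, for an `n`-dimensional vector space `V` and a
Young tableau `λ` with `l` boxes, the Schur module `𝕊_λ(V)` — realized as the image of the
Young symmetrizer acting on `V^{⊗l}` — is zero if and only if the Young diagram of `λ`
has strictly more than `n` rows. -/
theorem stmt_3 (K V : Type) [Field K] [CharZero K] [AddCommGroup V] [Module K V]
    [FiniteDimensional K V] (n : ℕ) (hn : Module.finrank K V = n)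
    (l : ℕ) (μ : YoungDiagram) (T : ↥μ.cells ≃ Fin l) :
    LinearMap.range (youngSymmetrizerAction K V l μ T) = ⊥ ↔ n < μ.colLen 0 := by
  rw [LinearMap.range_eq_bot, ← hn]
  refine ⟨fun h => ?_, fun h => ?_⟩
  · by_contra hle
    exact YoungTableau.youngSymmetrizerAction_ne_zero T K V (not_lt.1 hle) h
  · rw [YoungTableau.youngSymmetrizerAction_eq_mul,
      YoungTableau.colAntisymmetrizer_eq_zero T K V h, mul_zero]
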